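/- arXiv:1406.3309 — 6 statements merged into one kernel-verified Lean document; each statement's English description precedes it below -/
import Mathlib

section
/- Let Λ be an unbounded subset of ω₂ consisting of ordinals of cofinality ω₁, and let M and N be countable subsets of ω₂. Define Λ_M = {β ∈ Λ : β = min(Λ \ sup(M ∩ β))} and similarly Λ_N. Then Λ_M ∩ Λ_N is nonempty and has a largest element. -/
/-!
The least element of `Λ` lies in every `Λ_X`, because `min(Λ \ sup(X ∩ β)) ≤ β` for `β ∈ Λ`.
For the largest element of `Λ_M ∩ Λ_N` take its supremum `μ`. If `s < s'` both lie in `Λ_X`, then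
`X` has a point in `[s, s')`; so if `μ` were not attained it would be a limit point of both `M`
and `N`. It is below `ω₂`, since `M` is countable, and then `min(Λ \ μ) ≥ μ` would lie in
`Λ_M ∩ Λ_N`, which is absurd.
-/

open Ordinal Cardinal Set

/-- `Λ_M`: the set of `β ∈ Λ` with `β = min(Λ \ sup(M ∩ β))`. -/
noncomputable def LambdaAt (Λ M : Set Ordinal) : Set Ordinal :=
  {β ∈ Λ | β = sInf {δ ∈ Λ | sSup (M ∩ Set.Iio β) ≤ δ}}

/-- The set of nonzero limit points of a set of ordinals. -/
def limPts (M : Set Ordinal) : Set Ordinal :=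
  {γ | sSup (M ∩ Set.Iio γ) = γ ∧ 0 < γ}

theorem Set.Countable.sSup_lt_of_aleph0_lt_cof {s : Set Ordinal.{u}} {a : Ordinal.{u}}
    (hs : s.Countable) (ha : ℵ₀ < a.cof) (hsa : ∀ i ∈ s, i < a) : sSup s < a := by
  refine sSup_lt_of_lt_cof ?_ hsa
  rw [← lift_cof]
  exact (le_aleph0_iff_set_countable.2 hs).trans_lt
    (by simpa using Cardinal.lift_strictMono.{u, u + 1} ha)

theorem aleph0_lt_cof_ord_aleph_two : ℵ₀ < (Cardinal.aleph 2).ord.cof := by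
  rw [← one_add_one_eq_two, (isRegular_aleph_add_one 1).cof_ord]
  exact aleph0_lt_aleph_one.trans (aleph_lt_aleph.2 (lt_add_of_pos_right 1 zero_lt_one))

/-- `min(Λ \ γ)`, with the junk value `0` when no element of `Λ` is `≥ γ`. -/
noncomputable def nextIn (Λ : Set Ordinal) (γ : Ordinal) : Ordinal :=
  sInf {δ ∈ Λ | γ ≤ δ}

section NextIn

variable {Λ : Set Ordinal} {γ γ' δ : Ordinal}

theorem nextIn_le (hδ : δ ∈ Λ) (h : γ ≤ δ) : nextIn Λ γ ≤ δ :=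
  csInf_le (OrderBot.bddBelow _) ⟨hδ, h⟩

theorem nextIn_mem_and_le_nextIn (hδ : δ ∈ Λ) (h : γ ≤ δ) :
    nextIn Λ γ ∈ Λ ∧ γ ≤ nextIn Λ γ :=
  csInf_mem (⟨δ, hδ, h⟩ : {x ∈ Λ | γ ≤ x}.Nonempty)

theorem nextIn_mono (hγ : γ ≤ γ') (hδ : δ ∈ Λ) (h : γ' ≤ δ) : nextIn Λ γ ≤ nextIn Λ γ' :=
  csInf_le_csInf (OrderBot.bddBelow _) ⟨δ, hδ, h⟩ fun _ hx => ⟨hx.1, hγ.trans hx.2⟩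

end NextIn

theorem sSup_inter_Iio_le (X : Set Ordinal) (β : Ordinal) : sSup (X ∩ Iio β) ≤ β :=
  csSup_le' fun _ hx => hx.2.le

theorem sSup_inter_Iio_mono (X : Set Ordinal) {β β' : Ordinal} (h : β ≤ β') :
    sSup (X ∩ Iio β) ≤ sSup (X ∩ Iio β') :=
  csSup_le_csSup' (bddAbove_Iio.mono inter_subset_right)
    (inter_subset_inter_right _ (Iio_subset_Iio h))

section LambdaAt

variable {Λ X : Set Ordinal} {β s s' μ : Ordinal}

theorem mem_lambdaAt_iff : β ∈ LambdaAt Λ X ↔ β ∈ Λ ∧ β = nextIn Λ (sSup (X ∩ Iio β)) :=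
  Iff.rfl

theorem sInf_mem_lambdaAt (hΛ : Λ.Nonempty) (X : Set Ordinal) : sInf Λ ∈ LambdaAt Λ X := by
  have hmin : sInf Λ ∈ Λ := csInf_mem hΛ
  refine mem_lambdaAt_iff.2 ⟨hmin, le_antisymm ?_ (nextIn_le hmin (sSup_inter_Iio_le X _))⟩
  exact csInf_le (OrderBot.bddBelow _) (nextIn_mem_and_le_nextIn hmin (sSup_inter_Iio_le X _)).1

theorem lt_sSup_inter_Iio_of_lt (hs : s ∈ Λ) (hs' : s' ∈ LambdaAt Λ X) (h : s < s') :
    s < sSup (X ∩ Iio s') := by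
  by_contra! hle
  exact h.not_ge ((mem_lambdaAt_iff.1 hs').2.trans_le (nextIn_le hs hle))

theorem sSup_inter_Iio_sSup_eq {S : Set Ordinal} (hS : S ⊆ LambdaAt Λ X) (hSne : S.Nonempty)
    (hlt : ∀ s ∈ S, s < sSup S) :
    sSup (X ∩ Iio (sSup S)) = sSup S := by
  refine le_antisymm (sSup_inter_Iio_le X _) (le_of_forall_lt fun γ hγ => ?_)
  obtain ⟨s, hsS, hγs⟩ := exists_lt_of_lt_csSup hSne hγ
  obtain ⟨s', hs'S, hss'⟩ := exists_lt_of_lt_csSup hSne (hlt s hsS)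
  calc γ < s := hγs
    _ < sSup (X ∩ Iio s') := lt_sSup_inter_Iio_of_lt (hS hsS).1 (hS hs'S) hss'
    _ ≤ sSup (X ∩ Iio (sSup S)) := sSup_inter_Iio_mono X (hlt s' hs'S).le

theorem nextIn_mem_lambdaAt (hμ : sSup (X ∩ Iio μ) = μ) {δ : Ordinal} (hδ : δ ∈ Λ) (hμδ : μ ≤ δ) :
    nextIn Λ μ ∈ LambdaAt Λ X := by
  obtain ⟨hnextΛ, hμnext⟩ := nextIn_mem_and_le_nextIn hδ hμδ
  refine mem_lambdaAt_iff.2 ⟨hnextΛ, le_antisymm ?_ (nextIn_le hnextΛ (sSup_inter_Iio_le X _))⟩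
  have hsup : μ ≤ sSup (X ∩ Iio (nextIn Λ μ)) := hμ.ge.trans (sSup_inter_Iio_mono X hμnext)
  exact nextIn_mono hsup hnextΛ (sSup_inter_Iio_le X _)

end LambdaAt

theorem exists_isGreatest_inter_lambdaAt {Ω : Ordinal} {Λ : Set Ordinal} (hΛsub : Λ ⊆ Iio Ω)
    (hΛunbd : ∀ γ < Ω, ∃ β ∈ Λ, γ ≤ β) (hΛ : Λ.Nonempty) {M : Set Ordinal}
    (hM : sSup (M ∩ Iio Ω) < Ω) (N : Set Ordinal) :
    ∃ μ, IsGreatest (LambdaAt Λ M ∩ LambdaAt Λ N) μ := by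
  set S := LambdaAt Λ M ∩ LambdaAt Λ N
  have hSne : S.Nonempty := ⟨sInf Λ, sInf_mem_lambdaAt hΛ M, sInf_mem_lambdaAt hΛ N⟩
  have hSΩ : ∀ s ∈ S, s ≤ Ω := fun s hs => (hΛsub hs.1.1).le
  have hSbdd : BddAbove S := ⟨Ω, hSΩ⟩
  refine ⟨sSup S, ?_, fun s hs => le_csSup hSbdd hs⟩
  by_contra hμS
  have hlt : ∀ s ∈ S, s < sSup S := fun s hs =>
    (le_csSup hSbdd hs).lt_of_ne fun h => hμS (h ▸ hs)
  have hMμ := sSup_inter_Iio_sSup_eq (fun _ hs => hs.1) hSne hlt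
  have hNμ := sSup_inter_Iio_sSup_eq (fun _ hs => hs.2) hSne hlt
  have hμΩ : sSup S < Ω :=
    hMμ ▸ (sSup_inter_Iio_mono M (csSup_le hSne hSΩ)).trans_lt hM
  obtain ⟨δ, hδΛ, hμδ⟩ := hΛunbd _ hμΩ
  have hnextS : nextIn Λ (sSup S) ∈ S :=
    ⟨nextIn_mem_lambdaAt hMμ hδΛ hμδ, nextIn_mem_lambdaAt hNμ hδΛ hμδ⟩
  exact (hlt _ hnextS).not_ge (nextIn_mem_and_le_nextIn hδΛ hμδ).2

theorem comparison_point_exists_general (Λ : Set Ordinal)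
    (hΛsub : Λ ⊆ Set.Iio (Cardinal.aleph 2).ord)
    (hΛunbd : ∀ γ < (Cardinal.aleph 2).ord, ∃ β ∈ Λ, γ ≤ β)
    (M N : Set Ordinal) (hM : M.Countable) :
    (LambdaAt Λ M ∩ LambdaAt Λ N).Nonempty ∧
      ∃ β, IsGreatest (LambdaAt Λ M ∩ LambdaAt Λ N) β := by
  obtain ⟨β₀, hβ₀, -⟩ := hΛunbd 0 (ord_pos.2 (aleph_pos 2))
  have hMsup : sSup (M ∩ Iio (Cardinal.aleph 2).ord) < (Cardinal.aleph 2).ord :=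
    (hM.mono inter_subset_left).sSup_lt_of_aleph0_lt_cof aleph0_lt_cof_ord_aleph_two
      fun _ hx => hx.2
  exact ⟨⟨sInf Λ, sInf_mem_lambdaAt ⟨β₀, hβ₀⟩ M, sInf_mem_lambdaAt ⟨β₀, hβ₀⟩ N⟩,
    exists_isGreatest_inter_lambdaAt hΛsub hΛunbd ⟨β₀, hβ₀⟩ hMsup N⟩

/-- The comparison point exists: `Λ_M ∩ Λ_N` has a largest element. -/
theorem comparison_point_exists (Λ : Set Ordinal)
    (hΛsub : Λ ⊆ Set.Iio (Cardinal.aleph 2).ord)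
    (hΛunbd : ∀ γ < (Cardinal.aleph 2).ord, ∃ β ∈ Λ, γ ≤ β)
    (hΛcof : ∀ β ∈ Λ, Ordinal.cof β = Cardinal.aleph 1)
    (M N : Set Ordinal) (hM : M.Countable) (hMsub : M ⊆ Set.Iio (Cardinal.aleph 2).ord)
    (hN : N.Countable) (hNsub : N ⊆ Set.Iio (Cardinal.aleph 2).ord) :
    (LambdaAt Λ M ∩ LambdaAt Λ N).Nonempty ∧
      ∃ β, IsGreatest (LambdaAt Λ M ∩ LambdaAt Λ N) β :=
  comparison_point_exists_general Λ hΛsub hΛunbd M N hM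
end

section
/- Let Λ be an unbounded subset of ω₂ consisting of ordinals of cofinality ω₁, let M, N be countable subsets of ω₂, and let β ∈ Λ. If β_{M,N} ≤ β, then β_{M,N} = β_{M∩β, N}, where β_{M,N} denotes the comparison point max(Λ_M ∩ Λ_N). -/
/-!
Below `β`, membership in `Λ_M` only sees `M ∩ β`, so `Λ_M` and `Λ_{M ∩ β}` agree up to `β`.
Moreover `Λ_{M ∩ β}` has no point above `β ∈ Λ`: such a point `δ` would be the least element of
`Λ` above `sup (M ∩ β) ≤ β`, hence `δ ≤ β`. So both comparison points are the maximum of the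
same set.
-/

open Ordinal Cardinal Set

theorem mem_lambdaAt_inter_Iio_iff {Λ M : Set Ordinal} {β δ : Ordinal} (hδ : δ ≤ β) :
    δ ∈ LambdaAt Λ (M ∩ Iio β) ↔ δ ∈ LambdaAt Λ M := by
  have : M ∩ Iio β ∩ Iio δ = M ∩ Iio δ := by
    rw [inter_assoc, Iio_inter_Iio, min_eq_right hδ]
  simp only [LambdaAt, mem_ofPred_eq, this]

theorem le_of_mem_lambdaAt_inter_Iio {Λ M : Set Ordinal} {β δ : Ordinal} (hβ : β ∈ Λ)
    (hδ : δ ∈ LambdaAt Λ (M ∩ Iio β)) : δ ≤ β := by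
  by_contra! hβδ
  obtain ⟨-, hδ_eq⟩ := hδ
  have hcut : M ∩ Iio β ∩ Iio δ = M ∩ Iio β :=
    inter_eq_left.2 fun x hx => hx.2.trans hβδ
  have hsup : sSup (M ∩ Iio β) ≤ β := csSup_le' fun x hx => hx.2.le
  rw [hcut] at hδ_eq
  exact hβδ.not_ge (hδ_eq ▸ csInf_le (OrderBot.bddBelow _) ⟨hβ, hsup⟩)

theorem comparison_point_inter_general (Λ : Set Ordinal)
    (M N : Set Ordinal)
    (β : Ordinal) (hβ : β ∈ Λ)
    (b : Ordinal) (hb : IsGreatest (LambdaAt Λ M ∩ LambdaAt Λ N) b)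
    (b' : Ordinal) (hb' : IsGreatest (LambdaAt Λ (M ∩ Set.Iio β) ∩ LambdaAt Λ N) b')
    (hle : b ≤ β) :
    b = b' := by
  have hb'_le : b' ≤ β := le_of_mem_lambdaAt_inter_Iio hβ hb'.1.1
  apply le_antisymm
  · exact hb'.2 ⟨(mem_lambdaAt_inter_Iio_iff hle).2 hb.1.1, hb.1.2⟩
  · exact hb.2 ⟨(mem_lambdaAt_inter_Iio_iff hb'_le).1 hb'.1.1, hb'.1.2⟩

/-- If `β_{M,N} ≤ β` with `β ∈ Λ`, then `β_{M,N} = β_{M ∩ β, N}`. -/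
theorem comparison_point_inter (Λ : Set Ordinal)
    (hΛsub : Λ ⊆ Set.Iio (Cardinal.aleph 2).ord)
    (hΛunbd : ∀ γ < (Cardinal.aleph 2).ord, ∃ δ ∈ Λ, γ ≤ δ)
    (hΛcof : ∀ δ ∈ Λ, Ordinal.cof δ = Cardinal.aleph 1)
    (M N : Set Ordinal) (hM : M.Countable) (hMsub : M ⊆ Set.Iio (Cardinal.aleph 2).ord)
    (hN : N.Countable) (hNsub : N ⊆ Set.Iio (Cardinal.aleph 2).ord)
    (β : Ordinal) (hβ : β ∈ Λ)
    (b : Ordinal) (hb : IsGreatest (LambdaAt Λ M ∩ LambdaAt Λ N) b)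
    (b' : Ordinal) (hb' : IsGreatest (LambdaAt Λ (M ∩ Set.Iio β) ∩ LambdaAt Λ N) b')
    (hle : b ≤ β) :
    b = b' :=
  comparison_point_inter_general Λ M N β hβ b hb b' hb' hle
end

section
/- Let Λ be an unbounded subset of ω₂ consisting of ordinals of cofinality ω₁, and K, M, N countable subsets of ω₂ with M ⊆ N. Then the comparison points satisfy β_{K,M} ≤ β_{K,N}. -/
open Ordinal Cardinal Set

/- Enlarging `M` can only raise `sup (M ∩ β)`, and never above `β`; so `β` stays the least
element of `Λ` above it. -/
lemma lambdaAt_mono {Λ M N : Set Ordinal} (hMN : M ⊆ N) : LambdaAt Λ M ⊆ LambdaAt Λ N := by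
  rintro β ⟨hβΛ, hβ⟩
  have hsup_le : sSup (M ∩ Iio β) ≤ sSup (N ∩ Iio β) :=
    csSup_le_csSup' ⟨β, fun _ hx => hx.2.le⟩ (inter_subset_inter_left _ hMN)
  have hβ_mem : β ∈ {δ ∈ Λ | sSup (N ∩ Iio β) ≤ δ} :=
    ⟨hβΛ, csSup_le' fun _ hx => hx.2.le⟩
  refine ⟨hβΛ, le_antisymm ?_ (csInf_le' hβ_mem)⟩
  calc β = sInf {δ ∈ Λ | sSup (M ∩ Iio β) ≤ δ} := hβ
    _ ≤ sInf {δ ∈ Λ | sSup (N ∩ Iio β) ≤ δ} :=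
      csInf_le_csInf (OrderBot.bddBelow _) ⟨β, hβ_mem⟩ fun _ hδ => ⟨hδ.1, hsup_le.trans hδ.2⟩

theorem comparison_point_mono_general (Λ : Set Ordinal)
    (K M N : Set Ordinal)
    (hMN : M ⊆ N)
    (b₁ : Ordinal) (hb₁ : IsGreatest (LambdaAt Λ K ∩ LambdaAt Λ M) b₁)
    (b₂ : Ordinal) (hb₂ : IsGreatest (LambdaAt Λ K ∩ LambdaAt Λ N) b₂) :
    b₁ ≤ b₂ :=
  hb₂.2 ⟨hb₁.1.1, lambdaAt_mono hMN hb₁.1.2⟩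

/-- If `M ⊆ N`, then `β_{K,M} ≤ β_{K,N}`. -/
theorem comparison_point_mono (Λ : Set Ordinal)
    (hΛsub : Λ ⊆ Set.Iio (Cardinal.aleph 2).ord)
    (hΛunbd : ∀ γ < (Cardinal.aleph 2).ord, ∃ δ ∈ Λ, γ ≤ δ)
    (hΛcof : ∀ δ ∈ Λ, Ordinal.cof δ = Cardinal.aleph 1)
    (K M N : Set Ordinal)
    (hK : K.Countable) (hKsub : K ⊆ Set.Iio (Cardinal.aleph 2).ord)
    (hM : M.Countable) (hMsub : M ⊆ Set.Iio (Cardinal.aleph 2).ord)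
    (hN : N.Countable) (hNsub : N ⊆ Set.Iio (Cardinal.aleph 2).ord)
    (hMN : M ⊆ N)
    (b₁ : Ordinal) (hb₁ : IsGreatest (LambdaAt Λ K ∩ LambdaAt Λ M) b₁)
    (b₂ : Ordinal) (hb₂ : IsGreatest (LambdaAt Λ K ∩ LambdaAt Λ N) b₂) :
    b₁ ≤ b₂ :=
  comparison_point_mono_general Λ K M N hMN b₁ hb₁ b₂ hb₂
end

section
/- Let N be a countable set of ordinals closed in the following sense: for every β ∈ Λ with β < sup(N), min(N \ β) ∈ Λ, where Λ is a fixed unbounded class of ordinals. Let M be a set of ordinals and σ : M → N an order isomorphism such that for every δ ∈ M, δ ∈ Λ iff σ(δ) ∈ Λ. If α < γ are both in M and Λ ∩ [α, γ] = ∅, then Λ ∩ [σ(α), σ(γ)] = ∅. -/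
open Ordinal Set

/-!
If `β ∈ Λ` lay in `[σ α, σ γ]`, the least element `δ` of `N` above `β` would still lie in
that interval and belong to `Λ` (by the closure of `N`, or because `δ = β = σ γ` when `β` is
not below `sup N`). Pulling `δ` back along `σ` gives a point of `Λ ∩ [α, γ]`.
-/

theorem exists_mem_inter_Icc_of_sInf_mem {ι : Type*} [ConditionallyCompleteLinearOrderBot ι]
    [WellFoundedLT ι] {Λ N : Set ι} (hN : BddAbove N)
    (hclosed : ∀ β ∈ Λ, β < sSup N → sInf {δ ∈ N | β ≤ δ} ∈ Λ)
    {β y : ι} (hβ : β ∈ Λ) (hy : y ∈ N) (hβy : β ≤ y) :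
    ∃ δ ∈ N ∩ Λ, δ ∈ Icc β y := by
  set S := {δ ∈ N | β ≤ δ}
  have hmin : sInf S ∈ S := csInf_mem ⟨y, hy, hβy⟩
  refine ⟨_, ⟨hmin.1, ?_⟩, ⟨hmin.2, csInf_le' (show y ∈ S from ⟨hy, hβy⟩)⟩⟩
  rcases hβy.lt_or_eq with hlt | rfl
  · exact hclosed β hβ (hlt.trans_le (le_csSup hN hy))
  · rwa [le_antisymm (csInf_le' (show β ∈ S from ⟨hy, le_rfl⟩)) hmin.2]

theorem lambda_interval_preserved_general (Λ : Set Ordinal)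
    (M N : Set Ordinal) (hN : N.Countable)
    (hNclosed : ∀ β ∈ Λ, β < sSup N → sInf {δ ∈ N | β ≤ δ} ∈ Λ)
    (σ : Ordinal → Ordinal)
    (hmaps : ∀ x ∈ M, σ x ∈ N)
    (hsurj : ∀ y ∈ N, ∃ x ∈ M, σ x = y)
    (hmono : ∀ x ∈ M, ∀ y ∈ M, x < y ↔ σ x < σ y)
    (hΛpres : ∀ δ ∈ M, (δ ∈ Λ ↔ σ δ ∈ Λ))
    (α γ : Ordinal) (hα : α ∈ M) (hγ : γ ∈ M)
    (hint : Λ ∩ Set.Icc α γ = ∅) :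
    Λ ∩ Set.Icc (σ α) (σ γ) = ∅ := by
  have hbdd : BddAbove N := by
    have := hN.to_subtype
    exact Ordinal.bddAbove_of_small
  have hσ : StrictMonoOn σ M := fun x hx y hy hxy => (hmono x hx y hy).1 hxy
  refine eq_empty_of_forall_notMem fun β ⟨hβΛ, hαβ, hβγ⟩ => ?_
  obtain ⟨_, ⟨hδN, hδΛ⟩, hβδ, hδγ⟩ :=
    exists_mem_inter_Icc_of_sInf_mem hbdd hNclosed hβΛ (hmaps γ hγ) hβγ
  obtain ⟨x, hx, rfl⟩ := hsurj _ hδN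
  have hxΛ : x ∈ Λ ∩ Icc α γ :=
    ⟨(hΛpres x hx).2 hδΛ, (hσ.le_iff_le hα hx).1 (hαβ.trans hβδ),
      (hσ.le_iff_le hx hγ).1 hδγ⟩
  exact hint.subset hxΛ

/-- If `σ : M → N` is an order isomorphism preserving membership in `Λ`,
    `N` is closed in the sense that `min(N \ β) ∈ Λ` for `β ∈ Λ` below `sup N`,
    and `Λ ∩ [α,γ] = ∅` for `α < γ` in `M`, then `Λ ∩ [σ(α),σ(γ)] = ∅`. -/
theorem lambda_interval_preserved (Λ : Set Ordinal)
    (hΛunbd : ∀ o : Ordinal, ∃ β ∈ Λ, o ≤ β)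
    (M N : Set Ordinal) (hN : N.Countable)
    (hNclosed : ∀ β ∈ Λ, β < sSup N → sInf {δ ∈ N | β ≤ δ} ∈ Λ)
    (σ : Ordinal → Ordinal)
    (hmaps : ∀ x ∈ M, σ x ∈ N)
    (hsurj : ∀ y ∈ N, ∃ x ∈ M, σ x = y)
    (hmono : ∀ x ∈ M, ∀ y ∈ M, x < y ↔ σ x < σ y)
    (hΛpres : ∀ δ ∈ M, (δ ∈ Λ ↔ σ δ ∈ Λ))
    (α γ : Ordinal) (hα : α ∈ M) (hγ : γ ∈ M) (hαγ : α < γ)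
    (hint : Λ ∩ Set.Icc α γ = ∅) :
    Λ ∩ Set.Icc (σ α) (σ γ) = ∅ :=
  lambda_interval_preserved_general Λ M N hN hNclosed σ hmaps hsurj hmono hΛpres α γ hα hγ hint
end

section
/- For every ordinal ξ < ω₂ there exists a sequence ⟨e_β : β < ξ, cof(β) = ω₁⟩ such that each e_β is a club subset of β of order type ω₁, and for distinct β, β′, the sets e_β and e_{β′} have no common limit points: there is no ordinal δ with sup(e_β ∩ δ) = δ = sup(e_{β′} ∩ δ) > 0. -/
/-!
We build the sequence up to `μ + 1` by induction on `μ < ω₂`; only limit `μ` needs work.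
Fix a club `C` in `μ` of order type `cof μ ≤ ω₁`. Proper initial segments of `C` are countable,
so an ordinal `β < μ` of cofinality `ω₁` is not a limit point of `C`: it lies in a gap
`(sup (C ∩ β), min (C \ β)]` of `C`. For the ordinals `β` in the gap closing at `b ∈ C`, take the
sequence obtained for `b + 1` and keep only the part of `e_β` above the left end of the gap.
Limit points of `e_β` then lie in the gap of `β`, so sequences from distinct gaps share no limit
point, and none of them is a limit point of `C`, which serves as `e_μ` when `cof μ = ω₁`.
-/

open Ordinal Cardinal Set Order

def IsLimitPt (s : Set Ordinal) (δ : Ordinal) : Prop :=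
  0 < δ ∧ sSup (s ∩ Iio δ) = δ

structure IsClubIn (β : Ordinal) (s : Set Ordinal) : Prop where
  subset_Iio : s ⊆ Iio β
  exists_ge : ∀ x < β, ∃ y ∈ s, x ≤ y
  mem_of_isLimitPt : ∀ δ < β, IsLimitPt s δ → δ ∈ s

structure IsLimitDisjointClubSeq (ξ : Ordinal) (e : Ordinal → Set Ordinal) : Prop where
  isClubIn : ∀ β < ξ, cof β = ℵ₁ → IsClubIn β (e β)
  typeLT_eq : ∀ β < ξ, cof β = ℵ₁ → typeLT (e β) = (ℵ₁).ord
  not_isLimitPt : ∀ β < ξ, ∀ β' < ξ, cof β = ℵ₁ → cof β' = ℵ₁ → β ≠ β' →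
    ∀ δ, IsLimitPt (e β) δ → ¬ IsLimitPt (e β') δ

namespace IsLimitPt

variable {s t : Set Ordinal} {a β δ : Ordinal}

theorem nonempty (h : IsLimitPt s δ) : (s ∩ Iio δ).Nonempty :=
  nonempty_iff_ne_empty.2 fun he => h.1.ne' (by rw [← h.2, he, csSup_empty]; rfl)

theorem le_sSup_inter_Iio (h : IsLimitPt s δ) (hst : s ⊆ t) (hδβ : δ ≤ β) :
    δ ≤ sSup (t ∩ Iio β) :=
  calc δ = sSup (s ∩ Iio δ) := h.2.symm
    _ ≤ sSup (t ∩ Iio β) := csSup_le_csSup (bddAbove_Iio.mono inter_subset_right) h.nonempty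
        (inter_subset_inter hst (Iio_subset_Iio hδβ))

theorem mono (h : IsLimitPt s δ) (hst : s ⊆ t) : IsLimitPt t δ :=
  ⟨h.1, le_antisymm (csSup_le' fun _ hx => hx.2.le) (h.le_sSup_inter_Iio hst le_rfl)⟩

theorem mem_Ioc (h : IsLimitPt s δ) (hs : s ⊆ Ioc a β) : δ ∈ Ioc a β := by
  obtain ⟨y, hys, hyδ⟩ := h.nonempty
  refine ⟨(hs hys).1.trans hyδ, ?_⟩
  rw [← h.2]
  exact csSup_le' fun x hx => (hs hx.1).2

theorem not_isLimitPt_of_subset_Ioc {C : Set Ordinal} (h : IsLimitPt s δ)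
    (hs : s ⊆ Ioc (sSup (C ∩ Iio β)) β) : ¬ IsLimitPt C δ := fun hC =>
  have hδ := h.mem_Ioc hs
  (hC.le_sSup_inter_Iio subset_rfl hδ.2).not_gt hδ.1

end IsLimitPt

theorem isSuccLimit_of_cof_eq_aleph_one {β : Ordinal} (hβ : cof β = ℵ₁) : IsSuccLimit β :=
  one_lt_cof_iff.1 (hβ ▸ one_lt_aleph0.trans_le (aleph0_le_aleph 1))

namespace IsClubIn

variable {s : Set Ordinal} {a β x : Ordinal}

theorem exists_gt (hs : IsClubIn β s) (hβ : IsSuccLimit β) (hx : x < β) : ∃ y ∈ s, x < y :=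
  let ⟨y, hy, hxy⟩ := hs.exists_ge _ (hβ.succ_lt hx)
  ⟨y, hy, succ_le_iff.1 hxy⟩

theorem inter_Ioi (hs : IsClubIn β s) (hβ : IsSuccLimit β) (ha : a < β) :
    IsClubIn β (s ∩ Ioi a) where
  subset_Iio _ hx := hs.subset_Iio hx.1
  exists_ge _ hx :=
    let ⟨y, hy, hxy⟩ := hs.exists_gt hβ (max_lt hx ha)
    ⟨y, ⟨hy, (le_max_right _ _).trans_lt hxy⟩, (le_max_left _ _).trans hxy.le⟩
  mem_of_isLimitPt δ hδ h :=
    ⟨hs.mem_of_isLimitPt δ hδ (h.mono inter_subset_left),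
      (h.mem_Ioc fun _ hy => ⟨hy.2, (hs.subset_Iio hy.1).le⟩).1⟩

end IsClubIn

theorem mk_inter_Iio_lt_of_mem {S : Set Ordinal} {κ : Cardinal} {y : Ordinal}
    (hS : typeLT S ≤ κ.ord) (hy : y ∈ S) : #↥(S ∩ Iio y) < κ :=
  calc #↥(S ∩ Iio y) ≤ #↥(Subtype.val '' Iio (⟨y, hy⟩ : S)) :=
        mk_le_mk_of_subset fun x hx => ⟨⟨x, hx.1⟩, hx.2, rfl⟩
    _ ≤ #↥(Iio (⟨y, hy⟩ : S)) := mk_image_le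
    _ = card (typein (α := S) (· < ·) ⟨y, hy⟩) := rfl
    _ < κ := lt_ord.1 ((typein_lt_type _ _).trans_le hS)

theorem IsClubIn.mk_inter_Iio_lt {C : Set Ordinal} {κ : Cardinal} {μ β : Ordinal}
    (hC : IsClubIn μ C) (hCκ : typeLT C ≤ κ.ord) (hβ : β < μ) : #↥(C ∩ Iio β) < κ :=
  let ⟨_, hy, hβy⟩ := hC.exists_ge β hβ
  (mk_le_mk_of_subset (inter_subset_inter_right _ (Iio_subset_Iio hβy))).trans_lt
    (mk_inter_Iio_lt_of_mem hCκ hy)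

theorem typeLT_inter_Ioi_eq {S : Set Ordinal} {κ : Cardinal} {a : Ordinal} (hκ : ℵ₀ ≤ κ)
    (hS : typeLT S = κ.ord) (ha : ∃ y ∈ S, a < y) : typeLT ↥(S ∩ Ioi a) = κ.ord := by
  obtain ⟨y, hy, hay⟩ := ha
  refine le_antisymm (hS ▸ type_mono inter_subset_left) (ord_le.2 ?_)
  rw [card_type]
  by_contra! hlt
  have hsplit : S ⊆ (S ∩ Iio y) ∪ (S ∩ Ioi a) := fun x hx =>
    (lt_or_ge x y).imp (⟨hx, ·⟩) fun hyx => ⟨hx, hay.trans_le hyx⟩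
  have hSκ : #S = κ := by simpa using congrArg card hS
  have := (mk_le_mk_of_subset hsplit).trans (mk_union_le _ _)
  exact (hSκ ▸ this).not_gt (add_lt_of_lt hκ (mk_inter_Iio_lt_of_mem hS.le hy) hlt)

theorem isNormal_iSup_Iio_add_one {F : Ordinal.{u} → Ordinal.{u}} (hF : StrictMono F) :
    Order.IsNormal fun i => ⨆ j : Iio i, F j.1 + 1 := by
  have hle : ∀ i, ⨆ j : Iio i, F j.1 + 1 ≤ F i := fun i =>
    Ordinal.iSup_le fun j => add_one_le_iff.2 (hF j.2)
  have hlt : ∀ i k, i < k → F i + 1 ≤ ⨆ j : Iio k, F j.1 + 1 := fun i k hik =>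
    Ordinal.le_iSup (fun j : Iio k => F j.1 + 1) ⟨i, hik⟩
  refine Order.isNormal_iff.2 ⟨fun i k hik => (hle i).trans_lt (add_one_le_iff.1 (hlt i k hik)),
    fun o ho b hb => Ordinal.iSup_le fun j => ?_⟩
  exact (hlt _ _ (lt_add_one j.1)).trans (hb _ (ho.add_one_lt j.2))

theorem exists_isClubIn_typeLT_eq_ord_cof {μ : Ordinal.{u}} (hμ : IsSuccLimit μ) :
    ∃ C, IsClubIn μ C ∧ typeLT C = lift.{u + 1} (cof μ).ord := by
  set a := (cof μ).ord
  have ha : IsSuccLimit a := isSuccLimit_ord (aleph0_le_cof_iff.2 (one_lt_cof_iff.2 hμ))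
  obtain ⟨f, hf⟩ := exists_isFundamentalSeq (o := μ) rfl
  -- `F` extends `f` strictly monotonically beyond `a`, so that `g` is normal on all ordinals.
  let F j := if h : j < a then (f ⟨j, h⟩ : Ordinal) else μ + j
  have hF : StrictMono F := by
    intro i j hij
    simp only [F]
    split_ifs with hi hj hj
    · exact hf.strictMono (show (⟨i, hi⟩ : Iio a) < ⟨j, hj⟩ from hij)
    · exact (f _).2.trans_le le_self_add
    · exact absurd (hij.trans hj) hi
    · exact (add_lt_add_iff_left μ).2 hij
  set g := fun i => ⨆ j : Iio i, F j.1 + 1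
  have hg : Order.IsNormal g := isNormal_iSup_Iio_add_one hF
  have hga : g a = μ := by
    rw [← hf.iSup_add_one_eq]
    exact iSup_congr fun j => congrArg (· + 1) (dif_pos j.2)
  refine ⟨g '' Iio a, ⟨?_, ?_, ?_⟩, ?_⟩
  · rintro _ ⟨i, hi, rfl⟩
    exact hga ▸ hg.strictMono hi
  · intro x hx
    rw [← hga, hg.lt_iff_exists_lt ha] at hx
    obtain ⟨i, hi, hxi⟩ := hx
    exact ⟨g i, mem_image_of_mem g hi, hxi.le⟩
  · intro δ hδ h
    have hlub := isLUB_csSup h.nonempty (bddAbove_Iio.mono inter_subset_right)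
    rw [h.2] at hlub
    obtain ⟨i, rfl⟩ : δ ∈ range g := hg.dirSupClosed_range
      (fun _ hx => image_subset_range _ _ hx.1) h.nonempty (DirectedOn.of_linearOrder _) hlub
    exact mem_image_of_mem g (hg.strictMono.lt_iff_lt.1 (hga ▸ hδ))
  · rw [← type_lt_Iio]
    exact ((hg.strictMono.strictMonoOn _).orderIso).ordinalType_congr.symm

theorem le_sSup_inter_Iio_of_sInf_lt {C : Set Ordinal} {β β' : Ordinal} (hne : (C ∩ Ici β).Nonempty)
    (h : sInf (C ∩ Ici β) < sInf (C ∩ Ici β')) : β ≤ sSup (C ∩ Iio β') := by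
  obtain ⟨hbC, hβb⟩ := csInf_mem hne
  have hbβ' : sInf (C ∩ Ici β) < β' := lt_of_not_ge fun hβ'b => h.not_ge (csInf_le' ⟨hbC, hβ'b⟩)
  exact hβb.trans (le_csSup (bddAbove_Iio.mono inter_subset_right) ⟨hbC, hbβ'⟩)

theorem cof_le_aleph_one_of_lt_ord_aleph_two {μ : Ordinal} (hμ : μ < (ℵ_ 2).ord) : cof μ ≤ ℵ₁ := by
  have h := lt_ord.1 hμ
  rw [← one_add_one_eq_two, ← succ_aleph, lt_succ_iff] at h
  exact (cof_le_card μ).trans h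

namespace IsLimitDisjointClubSeq

variable {ξ μ : Ordinal} {e : Ordinal → Set Ordinal}

theorem zero : IsLimitDisjointClubSeq 0 e where
  isClubIn _ hβ := (not_lt_zero hβ).elim
  typeLT_eq _ hβ := (not_lt_zero hβ).elim
  not_isLimitPt _ hβ := (not_lt_zero hβ).elim

theorem mono {ξ' : Ordinal} (h : IsLimitDisjointClubSeq ξ' e) (hξ : ξ ≤ ξ') :
    IsLimitDisjointClubSeq ξ e where
  isClubIn β hβ := h.isClubIn β (hβ.trans_le hξ)
  typeLT_eq β hβ := h.typeLT_eq β (hβ.trans_le hξ)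
  not_isLimitPt β hβ β' hβ' := h.not_isLimitPt β (hβ.trans_le hξ) β' (hβ'.trans_le hξ)

theorem inter_Ioi (h : IsLimitDisjointClubSeq ξ e) {a : Ordinal → Ordinal}
    (ha : ∀ β < ξ, cof β = ℵ₁ → a β < β) :
    IsLimitDisjointClubSeq ξ fun β => e β ∩ Ioi (a β) where
  isClubIn β hβ hcof := (h.isClubIn β hβ hcof).inter_Ioi (isSuccLimit_of_cof_eq_aleph_one hcof)
    (ha β hβ hcof)
  typeLT_eq β hβ hcof := typeLT_inter_Ioi_eq (aleph0_le_aleph 1) (h.typeLT_eq β hβ hcof)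
    ((h.isClubIn β hβ hcof).exists_gt (isSuccLimit_of_cof_eq_aleph_one hcof) (ha β hβ hcof))
  not_isLimitPt β hβ β' hβ' hcof hcof' hne δ hδ hδ' := h.not_isLimitPt β hβ β' hβ' hcof hcof' hne δ
    (hδ.mono inter_subset_left) (hδ'.mono inter_subset_left)

theorem update (h : IsLimitDisjointClubSeq μ e) {C : Set Ordinal}
    (hC : cof μ = ℵ₁ → IsClubIn μ C ∧ typeLT C = (ℵ₁).ord ∧
      ∀ β < μ, cof β = ℵ₁ → ∀ δ, IsLimitPt (e β) δ → ¬ IsLimitPt C δ) :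
    IsLimitDisjointClubSeq (μ + 1) (Function.update e μ C) := by
  have hcases : ∀ {β}, β < μ + 1 → β < μ ∨ β = μ := fun hβ => (lt_add_one_iff.1 hβ).lt_or_eq
  have hbelow : ∀ {β}, β < μ → Function.update e μ C β = e β := fun hβ =>
    Function.update_of_ne hβ.ne _ _
  refine ⟨fun β hβ hcof => ?_, fun β hβ hcof => ?_, fun β hβ β' hβ' hcof hcof' hne δ => ?_⟩
  · rcases hcases hβ with hβ | rfl
    · exact hbelow hβ ▸ h.isClubIn β hβ hcof
    · rw [Function.update_self]
      exact (hC hcof).1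
  · rcases hcases hβ with hβ | rfl
    · exact hbelow hβ ▸ h.typeLT_eq β hβ hcof
    · rw [Function.update_self]
      exact (hC hcof).2.1
  · rcases hcases hβ with hβ | rfl <;> rcases hcases hβ' with hβ' | rfl
    · rw [hbelow hβ, hbelow hβ']
      exact h.not_isLimitPt β hβ β' hβ' hcof hcof' hne δ
    · rw [hbelow hβ, Function.update_self]
      exact (hC hcof').2.2 β hβ hcof δ
    · rw [hbelow hβ', Function.update_self]
      exact fun hδ hδ' => (hC hcof).2.2 β' hβ' hcof' δ hδ' hδ
    · exact absurd rfl hne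

theorem add_one_of_cof_ne (h : IsLimitDisjointClubSeq μ e) (hμ : cof μ ≠ ℵ₁) :
    IsLimitDisjointClubSeq (μ + 1) e := by
  simpa using h.update (C := e μ) fun h' => absurd h' hμ

end IsLimitDisjointClubSeq

theorem isLimitDisjointClubSeq_glue {μ : Ordinal} {C : Set Ordinal}
    {E : Ordinal → Ordinal → Set Ordinal} (hCμ : C ⊆ Iio μ)
    (hE : ∀ b ∈ C, IsLimitDisjointClubSeq (b + 1) (E b))
    (hC : ∀ β < μ, cof β = ℵ₁ → (C ∩ Ici β).Nonempty ∧ sSup (C ∩ Iio β) < β) :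
    IsLimitDisjointClubSeq μ fun β => E (sInf (C ∩ Ici β)) β ∩ Ioi (sSup (C ∩ Iio β)) := by
  set e := fun β => E (sInf (C ∩ Ici β)) β ∩ Ioi (sSup (C ∩ Iio β))
  have hb : ∀ β < μ, cof β = ℵ₁ → sInf (C ∩ Ici β) ∈ C ∩ Ici β := fun β hβ hcof =>
    csInf_mem (hC β hβ hcof).1
  have hE' : ∀ c ∈ C, IsLimitDisjointClubSeq (c + 1) fun β => E c β ∩ Ioi (sSup (C ∩ Iio β)) :=
    fun c hc => (hE c hc).inter_Ioi fun β hβ hcof =>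
      (hC β ((lt_add_one_iff.1 hβ).trans_lt (hCμ hc)) hcof).2
  have hclub : ∀ β < μ, cof β = ℵ₁ → IsClubIn β (e β) := fun β hβ hcof =>
    (hE' _ (hb β hβ hcof).1).isClubIn β (lt_add_one_iff.2 (hb β hβ hcof).2) hcof
  have hsep : ∀ β < μ, ∀ β' < μ, cof β = ℵ₁ → cof β' = ℵ₁ →
      sInf (C ∩ Ici β) < sInf (C ∩ Ici β') → ∀ δ, IsLimitPt (e β) δ → ¬ IsLimitPt (e β') δ := by
    intro β hβ β' hβ' hcof hcof' hbb δ hδ hδ'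
    have h := hδ.mem_Ioc fun x hx => ⟨hx.2, ((hclub β hβ hcof).subset_Iio hx).le⟩
    have h' := hδ'.mem_Ioc fun x hx => ⟨hx.2, ((hclub β' hβ' hcof').subset_Iio hx).le⟩
    exact (h.2.trans (le_sSup_inter_Iio_of_sInf_lt (hC β hβ hcof).1 hbb)).not_gt h'.1
  refine ⟨hclub, fun β hβ hcof => ?_, fun β hβ β' hβ' hcof hcof' hne => ?_⟩
  · exact (hE' _ (hb β hβ hcof).1).typeLT_eq β (lt_add_one_iff.2 (hb β hβ hcof).2) hcof
  · rcases lt_trichotomy (sInf (C ∩ Ici β)) (sInf (C ∩ Ici β')) with hbb | hbb | hbb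
    · exact hsep β hβ β' hβ' hcof hcof' hbb
    · have hβ'b : β' < sInf (C ∩ Ici β) + 1 := lt_add_one_iff.2 (hbb ▸ (hb β' hβ' hcof').2)
      simp only [e, ← hbb]
      exact (hE' _ (hb β hβ hcof).1).not_isLimitPt β (lt_add_one_iff.2 (hb β hβ hcof).2) β' hβ'b
        hcof hcof' hne
    · exact fun δ hδ hδ' => hsep β' hβ' β hβ hcof' hcof hbb δ hδ' hδ

theorem exists_isLimitDisjointClubSeq_add_one_of_isSuccLimit {μ : Ordinal.{u}} (hμ : IsSuccLimit μ)
    (hμ₂ : μ < (ℵ_ 2).ord) (ih : ∀ b < μ, ∃ E, IsLimitDisjointClubSeq (b + 1) E) :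
    ∃ e, IsLimitDisjointClubSeq (μ + 1) e := by
  obtain ⟨C, hC, hCtype⟩ := exists_isClubIn_typeLT_eq_ord_cof hμ
  have hCtype_le : typeLT C ≤ (ℵ₁).ord := by
    rw [hCtype, lift_ord]
    exact ord_le_ord.2 (lift_le_aleph_one.2 (cof_le_aleph_one_of_lt_ord_aleph_two hμ₂))
  have hgap : ∀ β < μ, cof β = ℵ₁ → (C ∩ Ici β).Nonempty ∧ sSup (C ∩ Iio β) < β := by
    intro β hβ hcof
    obtain ⟨y, hy, hβy⟩ := hC.exists_ge β hβ
    have hcount : #↥(C ∩ Iio β) < Cardinal.lift.{u + 1} (cof β) := by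
      simpa [hcof] using hC.mk_inter_Iio_lt hCtype_le hβ
    exact ⟨⟨y, hy, hβy⟩, sSup_lt_of_lt_cof (by rwa [← lift_cof]) fun _ hx => hx.2⟩
  choose! E hE using ih
  have hglue := isLimitDisjointClubSeq_glue hC.subset_Iio (fun b hb => hE b (hC.subset_Iio hb)) hgap
  refine ⟨_, hglue.update fun hcof => ⟨hC, ?_, fun β hβ hβcof δ hδ => ?_⟩⟩
  · rw [hCtype, hcof]
    simp
  · exact hδ.not_isLimitPt_of_subset_Ioc fun x hx =>
      ⟨hx.2, ((hglue.isClubIn β hβ hβcof).subset_Iio hx).le⟩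

theorem exists_isLimitDisjointClubSeq_add_one {μ : Ordinal} (hμ : μ < (ℵ_ 2).ord) :
    ∃ e, IsLimitDisjointClubSeq (μ + 1) e := by
  induction μ using WellFoundedLT.induction with
  | _ μ ih =>
    rcases zero_or_succ_or_isSuccLimit μ with rfl | ⟨ν, rfl⟩ | hlim
    · exact ⟨fun _ => ∅, IsLimitDisjointClubSeq.zero.add_one_of_cof_ne (by
      rw [cof_zero]; exact (aleph_pos 1).ne)⟩
    · obtain ⟨e, he⟩ := ih ν (lt_succ ν) ((lt_succ ν).trans hμ)
      exact ⟨e, he.add_one_of_cof_ne (by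
        rw [cof_add_one]; exact (one_lt_aleph0.trans aleph0_lt_aleph_one).ne)⟩
    · exact exists_isLimitDisjointClubSeq_add_one_of_isSuccLimit hlim hμ
        fun b hb => ih b hb (hb.trans hμ)

/-- For every `ξ < ω₂` there is a sequence `⟨e_β : β < ξ, cof β = ω₁⟩` of clubs of
    order type `ω₁` with pairwise no common limit points. -/
theorem disjoint_limit_clubs :
    ∀ ξ < (Cardinal.aleph 2).ord, ∃ e : Ordinal → Set Ordinal,
      (∀ β, β < ξ → Ordinal.cof β = Cardinal.aleph 1 →
        (e β ⊆ Set.Iio β ∧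
          (∀ x < β, ∃ y ∈ e β, x ≤ y) ∧
          (∀ δ < β, 0 < δ → sSup (e β ∩ Set.Iio δ) = δ → δ ∈ e β) ∧
          Ordinal.type ((· < ·) : ↥(e β) → ↥(e β) → Prop)
            = (Cardinal.aleph 1).ord)) ∧
      (∀ β β', β < ξ → β' < ξ → Ordinal.cof β = Cardinal.aleph 1 →
        Ordinal.cof β' = Cardinal.aleph 1 → β ≠ β' →
        ¬ ∃ δ : Ordinal, 0 < δ ∧ sSup (e β ∩ Set.Iio δ) = δ ∧
          sSup (e β' ∩ Set.Iio δ) = δ) := by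
  intro ξ hξ
  obtain ⟨e, he⟩ := exists_isLimitDisjointClubSeq_add_one hξ
  have he := he.mono le_self_add
  refine ⟨e, fun β hβ hcof => ?_, fun β β' hβ hβ' hcof hcof' hne ⟨δ, hδ, hs, hs'⟩ =>
    he.not_isLimitPt β hβ β' hβ' hcof hcof' hne δ ⟨hδ, hs⟩ ⟨hδ, hs'⟩⟩
  obtain ⟨hsub, hge, hclosed⟩ := he.isClubIn β hβ hcof
  exact ⟨hsub, hge, fun δ hδ h0 hs => hclosed δ hδ ⟨h0, hs⟩, he.typeLT_eq β hβ hcof⟩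
end

section
/- Suppose ⟨d_α : α < ω₂, cof(α) = ω₁⟩ is a sequence such that each d_α is a club subset of α of order type ω₁, and for all α, α′ of cofinality ω₁ below ω₂ and every ordinal ξ that is a common limit point of d_α and d_{α′}, one has d_α ∩ ξ = d_{α′} ∩ ξ. Then □_{ω₁} holds: there exists a sequence ⟨C_γ : γ < ω₂, γ limit⟩ such that each C_γ is a club subset of γ of order type at most ω₁, and whenever γ is a limit point of C_δ, C_γ = C_δ ∩ γ. -/
/-!
Put `C γ = d α ∩ γ` whenever `γ` is a limit point of some `d α`: by coherence this does not
depend on `α`, and every `γ` of cofinality `ω₁` is covered by `α = γ`. The remaining limits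
below `ω₂` have cofinality `ω`; there `C γ` is the range of an increasing `ω`-sequence cofinal
in `γ`, which has no limit points below `γ`. A limit point of `d α ∩ δ` is a limit point of
`d α`, so `C γ = d α ∩ γ = C δ ∩ γ`, which is the coherence of `C`.

The given family and the sequence to be built live in different universes, so the family is
first lifted to a common universe and the sequence obtained there is pulled back.
-/

open Ordinal Cardinal Set Filter

universe u v

theorem AccPt.le_of_subset_Iio {α : Type*} [LinearOrder α] [TopologicalSpace α]
    [OrderClosedTopology α] {x y : α} {S : Set α} (hS : S ⊆ Iio y) (hx : AccPt x (𝓟 S)) :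
    x ≤ y :=
  closure_minimal (hS.trans Iio_subset_Iic_self) isClosed_Iic
    (mem_closure_iff_clusterPt.2 hx.clusterPt)

theorem StrictMono.lt_of_accPt_range {α : Type*} [LinearOrder α] [TopologicalSpace α]
    [OrderTopology α] {g : ℕ → α} (hg : StrictMono g) {x : α} (hx : AccPt x (𝓟 (range g)))
    (n : ℕ) : g n < x := by
  by_contra! hxn
  have hfin : (Iio (g (n + 1)) ∩ range g).Finite := by
    refine ((finite_Iio (n + 1)).image g).subset ?_
    rintro _ ⟨hlt, m, rfl⟩
    exact ⟨m, hg.lt_iff_lt.1 hlt, rfl⟩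
  exact hfin.not_infinite
    (Set.Infinite.of_accPt (hx.nhds_inter (Iio_mem_nhds (hxn.trans_lt (hg n.lt_succ_self)))))

theorem accPt_principal_iff_sSup {o : Ordinal} {S : Set Ordinal} :
    AccPt o (𝓟 S) ↔ 0 < o ∧ sSup (S ∩ Iio o) = o := by
  rw [SuccOrder.accPt_principal, isMin_iff_eq_bot, Ordinal.bot_eq_zero, ← ne_eq,
    ← pos_iff_ne_zero]
  refine and_congr_right fun _ => ⟨fun h => ?_, fun h b hb => ?_⟩
  · refine le_antisymm (csSup_le' fun x hx => hx.2.le) (le_of_forall_lt fun b hb => ?_)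
    obtain ⟨x, hxS, hbx, hxo⟩ := h b hb
    exact hbx.trans_le (le_csSup ⟨o, fun x hx => hx.2.le⟩ ⟨hxS, hxo⟩)
  · rw [← h] at hb
    obtain ⟨x, ⟨hxS, hxo⟩, hbx⟩ := exists_lt_of_lt_csSup' hb
    exact ⟨x, hxS, hbx, hxo⟩

theorem typeLT_mono {α : Type*} [LinearOrder α] [WellFoundedLT α] {S T : Set α} (h : S ⊆ T) :
    typeLT S ≤ typeLT T :=
  (Subrel.inclusionEmbedding (· < ·) h).ordinal_type_le

theorem typeLT_lt_ord_aleph_one {α : Type*} [LinearOrder α] [WellFoundedLT α] {S : Set α}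
    (hS : S.Countable) :
    typeLT S < (ℵ_ 1).ord := by
  rw [Cardinal.lt_ord, card_type]
  exact lt_aleph_one_iff.2 (le_aleph0_iff_set_countable.2 hS)

theorem cof_le_aleph_one_of_lt_ord_aleph_two_s15 {o : Ordinal} (ho : o < (ℵ_ 2).ord) :
    o.cof ≤ ℵ_ 1 := by
  rw [Cardinal.lt_ord, ← one_add_one_eq_two, ← succ_aleph, Order.lt_succ_iff] at ho
  exact (cof_le_card o).trans ho

structure IsClubIn_s15 (γ : Ordinal) (S : Set Ordinal) : Prop where
  subset_Iio : S ⊆ Iio γ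
  exists_le : ∀ x < γ, ∃ y ∈ S, x ≤ y
  mem_of_accPt : ∀ δ < γ, AccPt δ (𝓟 S) → δ ∈ S

theorem isClubIn_iff_sSup {γ : Ordinal} {S : Set Ordinal} :
    IsClubIn_s15 γ S ↔ S ⊆ Iio γ ∧ (∀ x < γ, ∃ y ∈ S, x ≤ y) ∧
      ∀ δ < γ, 0 < δ → sSup (S ∩ Iio δ) = δ → δ ∈ S :=
  ⟨fun h => ⟨h.1, h.2, fun δ hδ h0 hsup => h.3 δ hδ (accPt_principal_iff_sSup.2 ⟨h0, hsup⟩)⟩,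
    fun h => ⟨h.1, h.2.1, fun δ hδ hacc => h.2.2 δ hδ (accPt_principal_iff_sSup.1 hacc).1
      (accPt_principal_iff_sSup.1 hacc).2⟩⟩

namespace IsClubIn_s15

variable {γ : Ordinal} {S : Set Ordinal}

theorem accPt (hS : IsClubIn_s15 γ S) (hγ : Order.IsSuccLimit γ) : AccPt γ (𝓟 S) := by
  refine SuccOrder.accPt_principal.2 ⟨hγ.not_isMin, fun b hb => ?_⟩
  obtain ⟨y, hyS, hby⟩ := hS.exists_le _ (hγ.succ_lt hb)
  exact ⟨y, hyS, Order.succ_le_iff.1 hby, hS.subset_Iio hyS⟩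

theorem inter_Iio {α : Ordinal} (hS : IsClubIn_s15 α S) (hγ : AccPt γ (𝓟 S)) :
    IsClubIn_s15 γ (S ∩ Iio γ) where
  subset_Iio := inter_subset_right
  exists_le x hx := by
    obtain ⟨y, hyS, hxy, hyγ⟩ := (SuccOrder.accPt_principal.1 hγ).2 x hx
    exact ⟨y, ⟨hyS, hyγ⟩, hxy.le⟩
  mem_of_accPt δ hδ h :=
    ⟨hS.mem_of_accPt δ (hδ.trans_le (hγ.le_of_subset_Iio hS.subset_Iio))
      (h.mono (principal_mono.2 inter_subset_left)), hδ⟩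

end IsClubIn_s15

structure IsCofinalSeq (γ : Ordinal) (g : ℕ → Ordinal) : Prop where
  strictMono : StrictMono g
  lt : ∀ n, g n < γ
  exists_le : ∀ x < γ, ∃ n, x ≤ g n

theorem exists_isCofinalSeq {γ : Ordinal} (h : γ.cof = ℵ₀) : ∃ g, IsCofinalSeq γ g := by
  obtain ⟨f, hf⟩ := exists_isFundamentalSeq (o := γ) (a := ω) (by rw [h, ord_aleph0])
  refine ⟨fun n => f ⟨n, natCast_lt_omega0 n⟩,
    ⟨fun m n hmn => ?_, fun n => (f _).2, fun x hx => ?_⟩⟩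
  · exact hf.strictMono (Subtype.mk_lt_mk.2 (Nat.cast_lt.2 hmn))
  · obtain ⟨_, ⟨⟨i, hi⟩, rfl⟩, hxi⟩ := hf.isCofinal_range ⟨x, hx⟩
    obtain ⟨n, rfl⟩ := lt_omega0.1 hi
    exact ⟨n, hxi⟩

namespace IsCofinalSeq

variable {γ : Ordinal} {g : ℕ → Ordinal}

theorem range_subset_Iio (hg : IsCofinalSeq γ g) : range g ⊆ Iio γ := by
  rintro _ ⟨n, rfl⟩
  exact hg.lt n

theorem eq_of_accPt (hg : IsCofinalSeq γ g) {δ : Ordinal} (hδ : AccPt δ (𝓟 (range g))) :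
    δ = γ := by
  refine (hδ.le_of_subset_Iio hg.range_subset_Iio).antisymm (not_lt.1 fun hδγ => ?_)
  obtain ⟨n, hn⟩ := hg.exists_le δ hδγ
  exact hn.not_gt (hg.strictMono.lt_of_accPt_range hδ n)

theorem isClubIn_range (hg : IsCofinalSeq γ g) : IsClubIn_s15 γ (range g) where
  subset_Iio := hg.range_subset_Iio
  exists_le x hx := by
    obtain ⟨n, hn⟩ := hg.exists_le x hx
    exact ⟨g n, mem_range_self n, hn⟩
  mem_of_accPt δ hδ h := absurd (hg.eq_of_accPt h) hδ.ne

end IsCofinalSeq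

structure CoherentClubs (d : Ordinal → Set Ordinal) : Prop where
  isClubIn : ∀ α < (ℵ_ 2).ord, α.cof = ℵ_ 1 → IsClubIn_s15 α (d α)
  typeLT_eq : ∀ α < (ℵ_ 2).ord, α.cof = ℵ_ 1 → typeLT (d α) = (ℵ_ 1).ord
  inter_Iio_eq : ∀ α < (ℵ_ 2).ord, ∀ α' < (ℵ_ 2).ord, α.cof = ℵ_ 1 → α'.cof = ℵ_ 1 →
    ∀ ξ, AccPt ξ (𝓟 (d α)) → AccPt ξ (𝓟 (d α')) → d α ∩ Iio ξ = d α' ∩ Iio ξ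

structure IsSquareSeq (C : Ordinal → Set Ordinal) : Prop where
  isClubIn : ∀ γ < (ℵ_ 2).ord, Order.IsSuccLimit γ → IsClubIn_s15 γ (C γ)
  typeLT_le : ∀ γ < (ℵ_ 2).ord, Order.IsSuccLimit γ → typeLT (C γ) ≤ (ℵ_ 1).ord
  eq_inter_Iio : ∀ δ < (ℵ_ 2).ord, Order.IsSuccLimit δ →
    ∀ γ, AccPt γ (𝓟 (C δ)) → C γ = C δ ∩ Iio γ

open Classical in
noncomputable def squareSeq (d : Ordinal → Set Ordinal) (γ : Ordinal) : Set Ordinal :=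
  if h : ∃ α < (ℵ_ 2).ord, α.cof = ℵ_ 1 ∧ AccPt γ (𝓟 (d α)) then d h.choose ∩ Iio γ
  else range (Classical.epsilon (IsCofinalSeq γ))

namespace CoherentClubs

variable {d : Ordinal → Set Ordinal}

theorem squareSeq_eq (hd : CoherentClubs d) {α γ : Ordinal} (hα : α < (ℵ_ 2).ord)
    (hαc : α.cof = ℵ_ 1) (hγ : AccPt γ (𝓟 (d α))) : squareSeq d γ = d α ∩ Iio γ := by
  have h : ∃ α < (ℵ_ 2).ord, α.cof = ℵ_ 1 ∧ AccPt γ (𝓟 (d α)) := ⟨α, hα, hαc, hγ⟩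
  obtain ⟨hα', hαc', hγ'⟩ := h.choose_spec
  rw [squareSeq, dif_pos h]
  exact hd.inter_Iio_eq _ hα' _ hα hαc' hαc γ hγ' hγ

theorem squareSeq_cases (hd : CoherentClubs d) {γ : Ordinal} (hγ : γ < (ℵ_ 2).ord)
    (hlim : Order.IsSuccLimit γ) :
    (∃ α < (ℵ_ 2).ord, α.cof = ℵ_ 1 ∧ AccPt γ (𝓟 (d α)) ∧ squareSeq d γ = d α ∩ Iio γ) ∨
      ∃ g, IsCofinalSeq γ g ∧ squareSeq d γ = range g := by
  by_cases h : ∃ α < (ℵ_ 2).ord, α.cof = ℵ_ 1 ∧ AccPt γ (𝓟 (d α))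
  · obtain ⟨α, hα, hαc, hγα⟩ := h
    exact .inl ⟨α, hα, hαc, hγα, hd.squareSeq_eq hα hαc hγα⟩
  · have hcof : γ.cof = ℵ₀ := by
      refine le_antisymm ?_ (aleph0_le_cof_iff.2 (one_lt_cof_iff.2 hlim))
      refine lt_aleph_one_iff.1 ((cof_le_aleph_one_of_lt_ord_aleph_two_s15 hγ).lt_of_ne fun hc => h ?_)
      exact ⟨γ, hγ, hc, (hd.isClubIn γ hγ hc).accPt hlim⟩
    refine .inr ⟨_, Classical.epsilon_spec (exists_isCofinalSeq hcof), ?_⟩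
    rw [squareSeq, dif_neg h]

theorem isSquareSeq_squareSeq (hd : CoherentClubs d) : IsSquareSeq (squareSeq d) where
  isClubIn γ hγ hlim := by
    obtain ⟨α, hα, hαc, hγα, heq⟩ | ⟨g, hg, heq⟩ := hd.squareSeq_cases hγ hlim <;> rw [heq]
    · exact (hd.isClubIn α hα hαc).inter_Iio hγα
    · exact hg.isClubIn_range
  typeLT_le γ hγ hlim := by
    obtain ⟨α, hα, hαc, -, heq⟩ | ⟨g, -, heq⟩ := hd.squareSeq_cases hγ hlim <;> rw [heq]
    · exact (typeLT_mono inter_subset_left).trans (hd.typeLT_eq α hα hαc).le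
    · exact (typeLT_lt_ord_aleph_one (countable_range g)).le
  eq_inter_Iio δ hδ hlim γ hγ := by
    obtain ⟨α, hα, hαc, -, heq⟩ | ⟨g, hg, heq⟩ := hd.squareSeq_cases hδ hlim <;>
      rw [heq] at hγ ⊢
    · have hγδ : γ ≤ δ := hγ.le_of_subset_Iio inter_subset_right
      rw [hd.squareSeq_eq hα hαc (hγ.mono (principal_mono.2 inter_subset_left)), inter_assoc,
        Iio_inter_Iio, min_eq_right hγδ]
    · obtain rfl := hg.eq_of_accPt hγ
      rw [inter_eq_self_of_subset_left hg.range_subset_Iio, heq]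

end CoherentClubs

section Lift

theorem accPt_lift_image_iff {o : Ordinal.{u}} {S : Set Ordinal.{u}} :
    AccPt (Ordinal.lift.{v} o) (𝓟 (Ordinal.lift.{v} '' S)) ↔ AccPt o (𝓟 S) := by
  simp only [SuccOrder.accPt_principal, isMin_iff_eq_bot, Ordinal.bot_eq_zero]
  rw [← Ordinal.lift_zero.{u, v}, Ordinal.lift_inj]
  refine and_congr_right fun _ => ⟨fun h b hb => ?_, fun h b hb => ?_⟩
  · obtain ⟨_, ⟨x, hxS, rfl⟩, hbx, hxo⟩ := h (Ordinal.lift.{v} b) (Ordinal.lift_lt.2 hb)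
    exact ⟨x, hxS, Ordinal.lift_lt.1 hbx, Ordinal.lift_lt.1 hxo⟩
  · obtain ⟨b, hb', rfl⟩ := lt_lift_iff.1 hb
    obtain ⟨x, hxS, hbx, hxo⟩ := h b hb'
    exact ⟨Ordinal.lift.{v} x, mem_image_of_mem _ hxS, Ordinal.lift_lt.2 hbx,
      Ordinal.lift_lt.2 hxo⟩

theorem lift_image_inter_Iio (S : Set Ordinal.{u}) (γ : Ordinal.{u}) :
    Ordinal.lift.{v} '' (S ∩ Iio γ) = Ordinal.lift.{v} '' S ∩ Iio (Ordinal.lift.{v} γ) := by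
  ext x
  constructor
  · rintro ⟨y, ⟨hyS, hyγ⟩, rfl⟩
    exact ⟨mem_image_of_mem _ hyS, Ordinal.lift_lt.2 hyγ⟩
  · rintro ⟨⟨y, hyS, rfl⟩, hyγ⟩
    exact ⟨y, ⟨hyS, Ordinal.lift_lt.1 hyγ⟩, rfl⟩

theorem isClubIn_lift_image_iff {γ : Ordinal.{u}} {S : Set Ordinal.{u}} :
    IsClubIn_s15 (Ordinal.lift.{v} γ) (Ordinal.lift.{v} '' S) ↔ IsClubIn_s15 γ S := by
  have hinj : Function.Injective Ordinal.lift.{v, u} := fun _ _ => Ordinal.lift_inj.1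
  refine ⟨fun h => ⟨fun x hx => ?_, fun x hx => ?_, fun δ hδ hacc => ?_⟩,
    fun h => ⟨?_, fun x' hx' => ?_, fun δ' hδ' hacc => ?_⟩⟩
  · exact Ordinal.lift_lt.1 (h.subset_Iio (mem_image_of_mem _ hx))
  · obtain ⟨_, ⟨y, hyS, rfl⟩, hxy⟩ := h.exists_le _ (Ordinal.lift_lt.2 hx)
    exact ⟨y, hyS, Ordinal.lift_le.1 hxy⟩
  · exact hinj.mem_set_image.1
      (h.mem_of_accPt _ (Ordinal.lift_lt.2 hδ) (accPt_lift_image_iff.2 hacc))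
  · rintro _ ⟨x, hx, rfl⟩
    exact Ordinal.lift_lt.2 (h.subset_Iio hx)
  · obtain ⟨x, hx, rfl⟩ := lt_lift_iff.1 hx'
    obtain ⟨y, hyS, hxy⟩ := h.exists_le x hx
    exact ⟨_, mem_image_of_mem _ hyS, Ordinal.lift_le.2 hxy⟩
  · obtain ⟨δ, hδ, rfl⟩ := lt_lift_iff.1 hδ'
    exact mem_image_of_mem _ (h.mem_of_accPt δ hδ (accPt_lift_image_iff.1 hacc))

theorem typeLT_lift_image (S : Set Ordinal.{u}) :
    typeLT (Ordinal.lift.{v} '' S) = Ordinal.lift.{v + 1} (typeLT S) := by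
  have h := (StrictMonoOn.orderIso Ordinal.lift.{v} S fun _ _ _ _ h =>
    Ordinal.lift_lt.2 h).toRelIsoLT.ordinal_lift_type_eq
  rw [Ordinal.lift_umax, Ordinal.lift_id'.{u + 1, v + 1}] at h
  exact h.symm

theorem image_lift_preimage {γ : Ordinal.{u}} {S : Set Ordinal.{max u v}}
    (hS : S ⊆ Iio (Ordinal.lift.{v} γ)) : Ordinal.lift.{v} '' (Ordinal.lift.{v} ⁻¹' S) = S :=
  image_preimage_eq_of_subset fun _ hx => mem_range_lift_of_le (hS hx).le

theorem exists_lift_eq_of_lt_ord_aleph_two {α : Ordinal.{max u v}} (hα : α < (ℵ_ 2).ord) :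
    ∃ β < (ℵ_ 2).ord, Ordinal.lift.{v} β = α :=
  lt_lift_iff.1 (by simpa using hα)

theorem lift_lt_ord_aleph_two_iff {α : Ordinal.{u}} :
    Ordinal.lift.{v} α < (ℵ_ 2).ord ↔ α < (ℵ_ 2).ord := by
  rw [← Ordinal.lift_lt.{v}]
  simp

theorem cof_lift_eq_aleph_one_iff {α : Ordinal.{u}} :
    (Ordinal.lift.{v} α).cof = ℵ_ 1 ↔ α.cof = ℵ_ 1 := by
  rw [← lift_cof, ← Cardinal.lift_inj.{u, v} (b := ℵ_ 1), Cardinal.lift_aleph, Ordinal.lift_one]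

def liftFamily (d : Ordinal.{u} → Set Ordinal.{u}) (α : Ordinal.{max u v}) :
    Set Ordinal.{max u v} :=
  ⋃ (β : Ordinal.{u}) (_ : Ordinal.lift.{v} β = α), Ordinal.lift.{v} '' d β

theorem liftFamily_lift (d : Ordinal.{u} → Set Ordinal.{u}) (α : Ordinal.{u}) :
    liftFamily.{u, v} d (Ordinal.lift.{v} α) = Ordinal.lift.{v} '' d α := by
  simp [liftFamily]

theorem CoherentClubs.liftFamily {d : Ordinal.{u} → Set Ordinal.{u}} (hd : CoherentClubs d) :
    CoherentClubs (liftFamily.{u, v} d) where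
  isClubIn α' hα' hc' := by
    obtain ⟨α, hα, rfl⟩ := exists_lift_eq_of_lt_ord_aleph_two.{u, v} hα'
    rw [liftFamily_lift]
    exact isClubIn_lift_image_iff.2 (hd.isClubIn α hα (cof_lift_eq_aleph_one_iff.1 hc'))
  typeLT_eq α' hα' hc' := by
    obtain ⟨α, hα, rfl⟩ := exists_lift_eq_of_lt_ord_aleph_two.{u, v} hα'
    rw [liftFamily_lift, typeLT_lift_image, hd.typeLT_eq α hα (cof_lift_eq_aleph_one_iff.1 hc')]
    simp
  inter_Iio_eq α' hα' β' hβ' hαc' hβc' ξ' hξα hξβ := by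
    obtain ⟨α, hα, rfl⟩ := exists_lift_eq_of_lt_ord_aleph_two.{u, v} hα'
    obtain ⟨β, hβ, rfl⟩ := exists_lift_eq_of_lt_ord_aleph_two.{u, v} hβ'
    have hαc := cof_lift_eq_aleph_one_iff.1 hαc'
    simp only [liftFamily_lift] at hξα hξβ ⊢
    obtain ⟨ξ, -, rfl⟩ := le_lift_iff.1
      (hξα.le_of_subset_Iio (isClubIn_lift_image_iff.2 (hd.isClubIn α hα hαc)).subset_Iio)
    rw [accPt_lift_image_iff] at hξα hξβ
    rw [← lift_image_inter_Iio, ← lift_image_inter_Iio, hd.inter_Iio_eq α hα β hβ hαc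
      (cof_lift_eq_aleph_one_iff.1 hβc') ξ hξα hξβ]

theorem IsSquareSeq.preimage_lift {C : Ordinal.{max u v} → Set Ordinal.{max u v}}
    (hC : IsSquareSeq C) :
    IsSquareSeq fun γ : Ordinal.{v} => Ordinal.lift.{u} ⁻¹' C (Ordinal.lift.{u} γ) := by
  have hclub (γ : Ordinal.{v}) (hγ : γ < (ℵ_ 2).ord) (hlim : Order.IsSuccLimit γ) :
      IsClubIn_s15 (Ordinal.lift.{u} γ) (C (Ordinal.lift.{u} γ)) :=
    hC.isClubIn _ (lift_lt_ord_aleph_two_iff.2 hγ) (isSuccLimit_lift.2 hlim)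
  have himage (γ : Ordinal.{v}) (hγ : γ < (ℵ_ 2).ord) (hlim : Order.IsSuccLimit γ) :=
    image_lift_preimage (hclub γ hγ hlim).subset_Iio
  refine ⟨fun γ hγ hlim => ?_, fun γ hγ hlim => ?_, fun δ hδ hlim γ hγ => ?_⟩
  · rw [← isClubIn_lift_image_iff.{v, u}, himage γ hγ hlim]
    exact hclub γ hγ hlim
  · rw [← Ordinal.lift_le.{u + 1}, ← typeLT_lift_image, himage γ hγ hlim]
    simpa using hC.typeLT_le _ (lift_lt_ord_aleph_two_iff.2 hγ) (isSuccLimit_lift.2 hlim)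
  · rw [← accPt_lift_image_iff.{v, u}, himage δ hδ hlim] at hγ
    rw [hC.eq_inter_Iio _ (lift_lt_ord_aleph_two_iff.2 hδ) (isSuccLimit_lift.2 hlim) _ hγ,
      preimage_inter]
    congr 1
    ext
    exact Ordinal.lift_lt

end Lift

/-- From a coherent sequence of clubs on the points of cofinality `ω₁` below `ω₂`,
    the square principle `□_{ω₁}` follows. -/
theorem square_of_coherent_clubs (d : Ordinal → Set Ordinal)
    (hclub : ∀ α, α < (Cardinal.aleph 2).ord → Ordinal.cof α = Cardinal.aleph 1 →
      d α ⊆ Set.Iio α ∧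
      (∀ x < α, ∃ y ∈ d α, x ≤ y) ∧
      (∀ δ < α, 0 < δ → sSup (d α ∩ Set.Iio δ) = δ → δ ∈ d α) ∧
      Ordinal.type ((· < ·) : ↥(d α) → ↥(d α) → Prop) = (Cardinal.aleph 1).ord)
    (hcoh : ∀ α α', α < (Cardinal.aleph 2).ord → α' < (Cardinal.aleph 2).ord →
      Ordinal.cof α = Cardinal.aleph 1 → Ordinal.cof α' = Cardinal.aleph 1 →
      ∀ ξ : Ordinal, 0 < ξ → sSup (d α ∩ Set.Iio ξ) = ξ → sSup (d α' ∩ Set.Iio ξ) = ξ →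
        d α ∩ Set.Iio ξ = d α' ∩ Set.Iio ξ) :
    ∃ C : Ordinal → Set Ordinal,
      (∀ γ, γ < (Cardinal.aleph 2).ord → Order.IsSuccLimit γ →
        C γ ⊆ Set.Iio γ ∧
        (∀ x < γ, ∃ y ∈ C γ, x ≤ y) ∧
        (∀ δ < γ, 0 < δ → sSup (C γ ∩ Set.Iio δ) = δ → δ ∈ C γ) ∧
        Ordinal.type ((· < ·) : ↥(C γ) → ↥(C γ) → Prop) ≤ (Cardinal.aleph 1).ord) ∧
      (∀ δ, δ < (Cardinal.aleph 2).ord → Order.IsSuccLimit δ →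
        ∀ γ : Ordinal, 0 < γ → sSup (C δ ∩ Set.Iio γ) = γ →
          C γ = C δ ∩ Set.Iio γ) := by
  have hd : CoherentClubs d :=
    ⟨fun α hα hc => let ⟨hsub, hcof, hclosed, _⟩ := hclub α hα hc
      isClubIn_iff_sSup.2 ⟨hsub, hcof, hclosed⟩,
     fun α hα hc => (hclub α hα hc).2.2.2,
     fun α hα α' hα' hc hc' ξ h h' => hcoh α α' hα hα' hc hc' ξ (accPt_principal_iff_sSup.1 h).1
      (accPt_principal_iff_sSup.1 h).2 (accPt_principal_iff_sSup.1 h').2⟩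
  have hC := IsSquareSeq.preimage_lift.{u_1, u_2}
    (CoherentClubs.liftFamily.{u_1, u_2} hd).isSquareSeq_squareSeq
  refine ⟨_, fun γ hγ hlim => ?_, fun δ hδ hlim γ h0 hsup =>
    hC.eq_inter_Iio δ hδ hlim γ (accPt_principal_iff_sSup.2 ⟨h0, hsup⟩)⟩
  obtain ⟨hsub, hcof, hclosed⟩ := isClubIn_iff_sSup.1 (hC.isClubIn γ hγ hlim)
  exact ⟨hsub, hcof, hclosed, hC.typeLT_le γ hγ hlim⟩
end
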